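/- arXiv:2012.04317 — 5 statements merged into one kernel-verified Lean document; each statement's English description precedes it below -/
import Mathlib

section
/- A morphism φ : (A,α) → (B,β) of Ω-valued sets is represented by a map h : A → B (i.e., φ(a,b) = α(a) ∧ β(ha,b) for all a,b) if and only if φ(a,b) ≤ β(ha,b) for all a ∈ A, b ∈ B. -/
variable {Ω A B C : Type*}

/-- An `Ω`-valued set structure: a symmetric, transitive `Ω`-valued equality. -/
structure IsOSet [Order.Frame Ω] (α : A → A → Ω) : Prop where
  symm : ∀ a b, α a b = α b a
  trans : ∀ a b c, α a b ⊓ α b c ≤ α a c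

/-- A morphism of `Ω`-valued sets, as a functional relation. -/
structure IsMorphism [Order.Frame Ω] (α : A → A → Ω) (β : B → B → Ω)
    (φ : A → B → Ω) : Prop where
  ext : ∀ a a' b b', α a a' ⊓ φ a b ⊓ β b b' ≤ φ a' b'
  sv : ∀ a b b', φ a b ⊓ φ a b' ≤ β b b'
  total : ∀ a, α a a = ⨆ b, φ a b


namespace IsMorphism

variable [Order.Frame Ω] {α : A → A → Ω} {β : B → B → Ω} {φ : A → B → Ω}

theorem le_diag (hφ : IsMorphism α β φ) (a : A) (b : B) : φ a b ≤ α a a :=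
  hφ.total a ▸ le_iSup (φ a) b

theorem inf_le_of_rel (hφ : IsMorphism α β φ) (a : A) (b b' : B) : φ a b ⊓ β b b' ≤ φ a b' :=
  calc φ a b ⊓ β b b' = α a a ⊓ φ a b ⊓ β b b' := by rw [inf_eq_right.mpr (hφ.le_diag a b)]
    _ ≤ φ a b' := hφ.ext a a b b'

theorem diag_inf_le (hφ : IsMorphism α β φ) (hβ : IsOSet β) {a : A} {c : B}
    (H : ∀ b, φ a b ≤ β c b) (b : B) : α a a ⊓ β c b ≤ φ a b := by
  rw [hφ.total a, iSup_inf_eq]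
  refine iSup_le fun b' => ?_
  calc φ a b' ⊓ β c b = φ a b' ⊓ (φ a b' ⊓ β c b) := (inf_left_idem _ _).symm
    _ ≤ φ a b' ⊓ (β b' c ⊓ β c b) := by gcongr; exact (H b').trans (hβ.symm c b').le
    _ ≤ φ a b' ⊓ β b' b := by gcongr; exact hβ.trans b' c b
    _ ≤ φ a b := hφ.inf_le_of_rel a b' b

end IsMorphism

theorem stmt5_general [Order.Frame Ω] (α : A → A → Ω) (β : B → B → Ω)
    (hβ : IsOSet β) (φ : A → B → Ω)
    (hφ : IsMorphism α β φ) (h : A → B) :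
    (∀ a b, φ a b = α a a ⊓ β (h a) b) ↔ (∀ a b, φ a b ≤ β (h a) b) :=
  ⟨fun H a b => (H a b).trans_le inf_le_right,
    fun H a b => le_antisymm (le_inf (hφ.le_diag a b) (H a b)) (hφ.diag_inf_le hβ (H a) b)⟩

/-- A morphism φ is represented by h iff φ(a,b) ≤ β(ha,b) for all a, b. -/
theorem stmt5 [Order.Frame Ω] (α : A → A → Ω) (β : B → B → Ω)
    (hα : IsOSet α) (hβ : IsOSet β) (φ : A → B → Ω)
    (hφ : IsMorphism α β φ) (h : A → B) :
    (∀ a b, φ a b = α a a ⊓ β (h a) b) ↔ (∀ a b, φ a b ≤ β (h a) b) :=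
  stmt5_general α β hβ φ hφ h
end

section
/- Let (A,α) be an Ω-valued set and for a ∈ A define σ_a := α(a,·). Then σ_a is a singleton of (A,α). Moreover, an Ω-valued set (A,α) satisfies 'every singleton is of the form σ_a for a unique a ∈ A' if and only if (A,α) is complete, i.e.: (1) the preorder b ⊑ a ⟺ α(a,b) = α(b,b) is antisymmetric; (2) for every a ∈ A and U ≤ α(a,a) there exists b ⊑ a with α(b,b) = U; (3) every pairwise compatible family {aᵢ} (meaning α(aᵢ,aⱼ) = α(aᵢ,aᵢ) ∧ α(aⱼ,aⱼ) for all i,j) has a supremum with respect to ⊑. -/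
variable {Ω A B C : Type*}

/-- A singleton of an Ω-valued set (A,α). -/
def IsSingleton [Order.Frame Ω] (α : A → A → Ω) (σ : A → Ω) : Prop :=
  (∀ a a', σ a ⊓ α a a' ≤ σ a') ∧ (∀ a a', σ a ⊓ σ a' ≤ α a a')

/-- A strict relation on an Ω-valued set (A,α). -/
def IsStrict [Order.Frame Ω] (α : A → A → Ω) (σ : A → Ω) : Prop :=
  (∀ a a', σ a ⊓ α a a' ≤ σ a') ∧ (∀ a, σ a ≤ α a a)


/-!
Write `b ⊑ a` for `α a b = α b b` (`b` is a restriction of `a`). For a pairwise compatible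
family `S` the map `c ↦ ⨆ b ∈ S, α b c` is a singleton, and an element representing it is exactly
a `⊑`-supremum of `S`; restricting a singleton `σ` to `U` gives the singleton `σ ⊓ U`, whose
representative is a restriction. Conversely, in a complete `Ω`-valued set every singleton `σ` is
the gluing of the compatible family `{b | σ b = α b b}` (each `σ c` is attained as the extent of a
restriction of `c`), so it is represented by the supremum of that family; antisymmetry of `⊑`
gives uniqueness, since `α a = α b` forces `a ⊑ b ⊑ a`.
-/

section Definitions

variable (α : A → A → Ω)

def IsRestriction (b a : A) : Prop := α a b = α b b

def PairwiseCompatible [Min Ω] (S : Set A) : Prop :=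
  ∀ a ∈ S, ∀ b ∈ S, α a b = α a a ⊓ α b b

def IsAmalgamation (S : Set A) (s : A) : Prop :=
  (∀ a ∈ S, IsRestriction α a s) ∧ ∀ t, (∀ a ∈ S, IsRestriction α a t) → IsRestriction α s t

def HasRestrictions [LE Ω] : Prop :=
  ∀ a, ∀ U : Ω, U ≤ α a a → ∃ b, IsRestriction α b a ∧ α b b = U

def IsCompleteOSet [SemilatticeInf Ω] : Prop :=
  (∀ a b, IsRestriction α b a → IsRestriction α a b → a = b) ∧ HasRestrictions α ∧
    ∀ S, PairwiseCompatible α S → ∃ s, IsAmalgamation α S s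

def glue [SupSet Ω] (S : Set A) : A → Ω := fun c => ⨆ b ∈ S, α b c

end Definitions

theorem isRestriction_of_apply_eq {α : A → A → Ω} {a b : A} (h : α a = α b) :
    IsRestriction α a b :=
  (congrFun h a).symm

section Frame

variable [Order.Frame Ω] {α : A → A → Ω}

theorem IsSingleton.le_self {σ : A → Ω} (hσ : IsSingleton α σ) (a : A) : σ a ≤ α a a := by
  simpa using hσ.2 a a

theorem IsSingleton.inf_const {σ : A → Ω} (hσ : IsSingleton α σ) (U : Ω) :
    IsSingleton α (fun c => σ c ⊓ U) :=
  ⟨fun c c' => le_inf ((inf_le_inf_right _ inf_le_left).trans (hσ.1 c c'))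
      (inf_le_left.trans inf_le_right),
    fun c c' => (inf_le_inf inf_le_left inf_le_left).trans (hσ.2 c c')⟩

namespace IsOSet

theorem le_right (hα : IsOSet α) (a b : A) : α a b ≤ α b b := by
  simpa [hα.symm b a] using hα.trans b a b

theorem le_left (hα : IsOSet α) (a b : A) : α a b ≤ α a a :=
  hα.symm a b ▸ hα.le_right b a

theorem isSingleton_self (hα : IsOSet α) (a : A) : IsSingleton α (α a) :=
  ⟨hα.trans a, fun b c => hα.symm a b ▸ hα.trans b a c⟩

theorem le_of_isRestriction (hα : IsOSet α) {a b : A} (h : IsRestriction α b a) (c : A) :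
    α b c ≤ α a c :=
  calc α b c = α a b ⊓ α b c := by rw [h, inf_eq_right.mpr (hα.le_left b c)]
    _ ≤ α a c := hα.trans a b c

theorem apply_eq_of_isRestriction (hα : IsOSet α) {a b : A} (hba : IsRestriction α b a)
    (hab : IsRestriction α a b) : α a = α b :=
  funext fun c => le_antisymm (hα.le_of_isRestriction hab c) (hα.le_of_isRestriction hba c)

theorem isRestriction_of_apply_eq_inf (hα : IsOSet α) {a b : A} {U : Ω} (hU : U ≤ α a a)
    (h : ∀ c, α b c = α a c ⊓ U) : IsRestriction α b a ∧ α b b = U := by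
  have hba : α b a = U := by rw [h, inf_eq_right.mpr hU]
  have hbb : α b b = U := by rw [h, hα.symm a b, hba, inf_idem]
  exact ⟨by rw [IsRestriction, hα.symm a b, hba, hbb], hbb⟩

theorem biSup_apply_self (hα : IsOSet α) {S : Set A} {a : A} (ha : a ∈ S) :
    ⨆ b ∈ S, α b a = α a a :=
  le_antisymm (iSup₂_le fun b _ => hα.le_right b a) (le_iSup₂_of_le a ha le_rfl)

theorem inf_le_of_compatible (hα : IsOSet α) {b b' : A} (h : α b b' = α b b ⊓ α b' b')
    (c c' : A) : α b c ⊓ α b' c' ≤ α c c' :=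
  calc α b c ⊓ α b' c' ≤ α c b ⊓ α b b' ⊓ α b' c' := by
        refine le_inf (le_inf (hα.symm b c ▸ inf_le_left) ?_) inf_le_right
        exact h ▸ inf_le_inf (hα.le_left b c) (hα.le_left b' c')
    _ ≤ α c b' ⊓ α b' c' := inf_le_inf_right _ (hα.trans c b b')
    _ ≤ α c c' := hα.trans c b' c'

theorem isSingleton_glue (hα : IsOSet α) {S : Set A} (hS : PairwiseCompatible α S) :
    IsSingleton α (glue α S) := by
  refine ⟨fun c c' => ?_, fun c c' => ?_⟩
  · simp only [glue, iSup_inf_eq]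
    exact iSup₂_le fun b hb => le_iSup₂_of_le b hb (hα.trans b c c')
  · simp only [glue, iSup_inf_eq, inf_iSup_eq]
    exact iSup₂_le fun b hb => iSup₂_le fun b' hb' =>
      hα.inf_le_of_compatible (hS b' hb' b hb) c c'

theorem isAmalgamation_of_apply_eq_glue (hα : IsOSet α) {S : Set A} {s : A}
    (h : α s = glue α S) : IsAmalgamation α S s := by
  refine ⟨fun a ha => by rw [IsRestriction, h, glue, hα.biSup_apply_self ha], fun t ht => ?_⟩
  refine le_antisymm (hα.le_right t s) ?_
  rw [h, glue]
  exact iSup₂_le fun b hb => hα.le_of_isRestriction (ht b hb) s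

theorem apply_eq_glue_of_le (hα : IsOSet α) {S : Set A} {s : A}
    (hS : ∀ b ∈ S, IsRestriction α b s) (hs : α s s ≤ ⨆ b ∈ S, α b b) : α s = glue α S := by
  funext c
  refine le_antisymm ?_ (iSup₂_le fun b hb => hα.le_of_isRestriction (hS b hb) c)
  calc α s c = (⨆ b ∈ S, α b b) ⊓ α s c :=
        (inf_eq_right.mpr ((hα.le_left s c).trans hs)).symm
    _ = ⨆ b ∈ S, α b s ⊓ α s c := by
        simp only [iSup_inf_eq]
        refine biSup_congr fun b hb => ?_
        rw [hα.symm b s, hS b hb]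
    _ ≤ glue α S c := iSup₂_mono fun b _ => hα.trans b s c

/-- The restriction of `s` to `⨆ b ∈ S, α b b` is again an upper bound of `S`, so it lies above
the supremum `s`. -/
theorem apply_self_le_of_isAmalgamation (hα : IsOSet α) (hres : HasRestrictions α)
    {S : Set A} {s : A} (hs : IsAmalgamation α S s) : α s s ≤ ⨆ b ∈ S, α b b := by
  have hU : ⨆ b ∈ S, α b b ≤ α s s :=
    iSup₂_le fun b hb => hs.1 b hb ▸ hα.le_left s b
  obtain ⟨t, hts, htt⟩ := hres s _ hU
  have hSt : ∀ b ∈ S, IsRestriction α b t := by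
    intro b hb
    refine le_antisymm (hα.le_right t b) ?_
    calc α b b ≤ α t s ⊓ α s b := by
          refine le_inf ?_ (hs.1 b hb).ge
          rw [hα.symm t s, hts, htt]
          exact le_iSup₂_of_le b hb le_rfl
      _ ≤ α t b := hα.trans t s b
  rw [← hs.2 t hSt, hα.symm t s, hts, htt]

theorem pairwiseCompatible_setOf_isSingleton (hα : IsOSet α) {σ : A → Ω}
    (hσ : IsSingleton α σ) : PairwiseCompatible α {b | σ b = α b b} := by
  intro a (ha : σ a = α a a) b (hb : σ b = α b b)
  refine le_antisymm (le_inf (hα.le_left a b) (hα.le_right a b)) ?_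
  rw [← ha, ← hb]
  exact hσ.2 a b

theorem eq_glue_of_isSingleton (hα : IsOSet α) (hres : HasRestrictions α) {σ : A → Ω}
    (hσ : IsSingleton α σ) : σ = glue α {b | σ b = α b b} := by
  funext c
  refine le_antisymm ?_ (iSup₂_le fun b (hb : σ b = α b b) => ?_)
  · obtain ⟨b, hcb, hbb⟩ := hres c (σ c) (hσ.le_self c)
    have hb : σ b = α b b := by
      refine le_antisymm (hσ.le_self b) ?_
      calc α b b = σ c ⊓ α c b := by rw [hcb, hbb, inf_idem]
        _ ≤ σ b := hσ.1 c b
    calc σ c = α b c := by rw [hα.symm b c, hcb, hbb]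
      _ ≤ glue α _ c := le_iSup₂_of_le (f := fun b _ => α b c) b hb le_rfl
  · calc α b c = σ b ⊓ α b c := by rw [hb, inf_eq_right.mpr (hα.le_left b c)]
      _ ≤ σ c := hσ.1 b c

theorem isCompleteOSet_of_existsUnique (hα : IsOSet α)
    (h : ∀ σ : A → Ω, IsSingleton α σ → ∃! a, σ = α a) : IsCompleteOSet α := by
  refine ⟨fun a b hba hab => ?_, fun a U hU => ?_, fun S hS => ?_⟩
  · exact (h (α a) (hα.isSingleton_self a)).unique rfl (hα.apply_eq_of_isRestriction hba hab)
  · obtain ⟨b, hb, -⟩ := h _ ((hα.isSingleton_self a).inf_const U)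
    exact ⟨b, hα.isRestriction_of_apply_eq_inf hU fun c => (congrFun hb c).symm⟩
  · obtain ⟨s, hs, -⟩ := h _ (hα.isSingleton_glue hS)
    exact ⟨s, hα.isAmalgamation_of_apply_eq_glue hs.symm⟩

theorem existsUnique_of_isCompleteOSet (hα : IsOSet α) (h : IsCompleteOSet α) (σ : A → Ω)
    (hσ : IsSingleton α σ) : ∃! a, σ = α a := by
  obtain ⟨hanti, hres, hamalg⟩ := h
  obtain ⟨s, hs⟩ := hamalg _ (hα.pairwiseCompatible_setOf_isSingleton hσ)
  have hσs : σ = α s := by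
    rw [hα.eq_glue_of_isSingleton hres hσ,
      hα.apply_eq_glue_of_le hs.1 (hα.apply_self_le_of_isAmalgamation hres hs)]
  refine ⟨s, hσs, fun y hy => hanti y s ?_ ?_⟩
  · exact isRestriction_of_apply_eq (hσs.symm.trans hy)
  · exact isRestriction_of_apply_eq (hy.symm.trans hσs)

end IsOSet

end Frame

/-- Each α(a,·) is a singleton, and every singleton is of the form α(a,·)
for a unique a iff (A,α) is complete (in the order-theoretic sense:
antisymmetry of ⊑, existence of restrictions, and amalgamations of
pairwise-compatible families). Here b ⊑ a means α(a,b) = α(b,b). -/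
theorem stmt9 [Order.Frame Ω] (α : A → A → Ω) (hα : IsOSet α) :
    (∀ a, IsSingleton α (α a)) ∧
    ((∀ σ : A → Ω, IsSingleton α σ → ∃! a, σ = α a) ↔
      ((∀ a b, α a b = α b b → α b a = α a a → a = b) ∧
       (∀ a, ∀ U : Ω, U ≤ α a a → ∃ b, α a b = α b b ∧ α b b = U) ∧
       (∀ S : Set A, (∀ a ∈ S, ∀ b ∈ S, α a b = α a a ⊓ α b b) →
         ∃ s, (∀ a ∈ S, α s a = α a a) ∧
           ∀ t, (∀ a ∈ S, α t a = α a a) → α t s = α s s))) :=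
  ⟨hα.isSingleton_self,
    ⟨hα.isCompleteOSet_of_existsUnique, hα.existsUnique_of_isCompleteOSet⟩⟩
end

section
/- Let (A,α), (B,β) be Ω-valued sets with (B,β) complete. Then every morphism φ : (A,α) → (B,β) is represented by a unique map h : A → B satisfying α(a,a') ≤ β(ha,ha') and α(a,a) = β(ha,ha) for all a, a' ∈ A. -/
variable {Ω A B C : Type*}

/-!
Each `φ a` is a singleton of `(B, β)`, so completeness yields `h a` with `φ a = β (h a)`.
Given the diagonal condition `α a a = β (h a) (h a)`, "`h` represents `φ`" is equivalent to
`φ a = β (h a)`, so any such `h` is the one produced by completeness.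
-/

def Represents [Order.Frame Ω] (α : A → A → Ω) (β : B → B → Ω) (φ : A → B → Ω)
    (h : A → B) : Prop :=
  ∀ a b, φ a b = α a a ⊓ β (h a) b

section

variable [Order.Frame Ω] {α : A → A → Ω} {β : B → B → Ω} {φ : A → B → Ω}

namespace IsOSet

theorem le_diag (hβ : IsOSet β) (x y : B) : β x y ≤ β x x :=
  calc β x y = β x y ⊓ β y x := by rw [hβ.symm y x, inf_idem]
    _ ≤ β x x := hβ.trans x y x

theorem diag_inf_eq (hβ : IsOSet β) (x y : B) : β x x ⊓ β x y = β x y :=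
  inf_eq_right.mpr (hβ.le_diag x y)

end IsOSet

namespace IsMorphism

theorem isSingleton (hφ : IsMorphism α β φ) (a : A) : IsSingleton β (φ a) := by
  refine ⟨fun b b' => ?_, hφ.sv a⟩
  have hext := hφ.ext a a b b'
  rwa [inf_eq_right.mpr (hφ.le_diag a b)] at hext

theorem diag_eq_of_eq (hφ : IsMorphism α β φ) (hβ : IsOSet β) {a : A} {b : B}
    (hab : φ a = β b) : α a a = β b b := by
  apply le_antisymm
  · rw [hφ.total, hab]
    exact iSup_le (hβ.le_diag b)
  · rw [← hab]
    exact hφ.le_diag a b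

theorem represents_of_forall_eq (hφ : IsMorphism α β φ) (hβ : IsOSet β) {h : A → B}
    (hh : ∀ a, φ a = β (h a)) : Represents α β φ h := by
  intro a b
  rw [hh a, hφ.diag_eq_of_eq hβ (hh a), hβ.diag_inf_eq]

theorem le_map_of_forall_eq (hφ : IsMorphism α β φ) (hα : IsOSet α) (hβ : IsOSet β)
    {h : A → B} (hh : ∀ a, φ a = β (h a)) (a a' : A) : α a a' ≤ β (h a) (h a') := by
  have hle : α a a' ≤ β (h a) (h a) :=
    (hα.le_diag a a').trans (hφ.diag_eq_of_eq hβ (hh a)).le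
  calc α a a' = α a a' ⊓ φ a (h a) ⊓ β (h a) (h a) := by
        rw [hh a, inf_assoc, inf_idem, inf_eq_left.mpr hle]
    _ ≤ φ a' (h a) := hφ.ext a a' (h a) (h a)
    _ = β (h a) (h a') := by rw [hh a', hβ.symm]

end IsMorphism

theorem Represents.eq_of_diag (hβ : IsOSet β) {h : A → B} (hr : Represents α β φ h)
    (hd : ∀ a, α a a = β (h a) (h a)) (a : A) : φ a = β (h a) := by
  funext b
  rw [hr a b, hd a, hβ.diag_inf_eq]

end

/-- If (B,β) is complete (every singleton is uniquely representable), then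
every morphism φ : (A,α) → (B,β) is represented by a unique map h with
α(a,a') ≤ β(ha,ha') and α(a) = β(ha). -/
theorem stmt10 [Order.Frame Ω] (α : A → A → Ω) (β : B → B → Ω)
    (hα : IsOSet α) (hβ : IsOSet β)
    (hcomp : ∀ σ : B → Ω, IsSingleton β σ → ∃! b, σ = β b)
    (φ : A → B → Ω) (hφ : IsMorphism α β φ) :
    ∃! h : A → B,
      (∀ a b, φ a b = α a a ⊓ β (h a) b) ∧
      (∀ a a', α a a' ≤ β (h a) (h a')) ∧
      (∀ a, α a a = β (h a) (h a)) := by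
  choose h hh hu using fun a => hcomp (φ a) (hφ.isSingleton a)
  refine ⟨h, ⟨hφ.represents_of_forall_eq hβ hh, hφ.le_map_of_forall_eq hα hβ hh,
    fun a => hφ.diag_eq_of_eq hβ (hh a)⟩, ?_⟩
  rintro h' ⟨hr, -, hd⟩
  funext a
  exact hu a (h' a) (Represents.eq_of_diag hβ hr hd a)
end

section
/- Let (A,α) be an Ω-valued set. The poset 𝒫(A,α) of strict relations on (A,α), ordered pointwise, is a frame: its top is a ↦ α(a,a), bottom is a ↦ 0, meets and arbitrary joins are computed pointwise, and the Heyting implication is (σ ⇒ τ)(a) = α(a,a) ∧ (σ(a) ⇒ τ(a)), where ⇒ on the right is the implication of Ω. In particular the infinitary distributive law σ ∧ ⋁ᵢ τᵢ = ⋁ᵢ (σ ∧ τᵢ) holds in 𝒫(A,α). -/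
variable {Ω A B C : Type*}

section

variable [Order.Frame Ω] {α : A → A → Ω}

theorem IsOSet.le_diag_right (hα : IsOSet α) (a a' : A) : α a a' ≤ α a' a' :=
  calc α a a' = α a' a ⊓ α a a' := by rw [hα.symm a a', inf_idem]
    _ ≤ α a' a' := hα.trans a' a a'

namespace IsStrict

theorem diag (hα : IsOSet α) : IsStrict α (fun a => α a a) :=
  ⟨fun a a' => inf_le_of_right_le (hα.le_diag_right a a'), fun _ => le_rfl⟩

theorem bot : IsStrict α (fun _ => (⊥ : Ω)) :=
  ⟨fun _ _ => inf_le_left, fun _ => bot_le⟩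

theorem inf {σ τ : A → Ω} (hσ : IsStrict α σ) (hτ : IsStrict α τ) :
    IsStrict α (fun a => σ a ⊓ τ a) :=
  ⟨fun a a' => le_inf
      ((inf_le_inf_right _ inf_le_left).trans (hσ.1 a a'))
      ((inf_le_inf_right _ inf_le_right).trans (hτ.1 a a')),
    fun a => inf_le_left.trans (hσ.2 a)⟩

theorem biSup {S : Set (A → Ω)} (hS : ∀ σ ∈ S, IsStrict α σ) :
    IsStrict α (fun a => ⨆ σ ∈ S, σ a) := by
  refine ⟨fun a a' => ?_, fun a => iSup₂_le fun σ hσ => (hS σ hσ).2 a⟩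
  simp only [iSup_inf_eq]
  exact iSup₂_mono fun σ hσ => (hS σ hσ).1 a a'

theorem himp (hα : IsOSet α) {σ τ : A → Ω} (hσ : IsStrict α σ) (hτ : IsStrict α τ) :
    IsStrict α (fun a => α a a ⊓ (σ a ⇨ τ a)) := by
  refine ⟨fun a a' => le_inf (inf_le_of_right_le (hα.le_diag_right a a')) ?_,
    fun _ => inf_le_left⟩
  rw [le_himp_iff]
  have hσ' : σ a' ⊓ α a a' ≤ σ a := by
    rw [hα.symm a a']
    exact hσ.1 a' a
  calc α a a ⊓ (σ a ⇨ τ a) ⊓ α a a' ⊓ σ a'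
      ≤ (σ a ⇨ τ a) ⊓ σ a ⊓ α a a' :=
        le_inf (le_inf (inf_le_left.trans (inf_le_left.trans inf_le_right))
          (le_inf inf_le_right (inf_le_left.trans inf_le_right) |>.trans hσ'))
          (inf_le_left.trans inf_le_right)
    _ ≤ τ a ⊓ α a a' := inf_le_inf_right _ himp_inf_le
    _ ≤ τ a' := hτ.1 a a'

theorem inf_le_iff_le_himp {ρ σ τ : A → Ω} (hρ : IsStrict α ρ) :
    (∀ a, ρ a ⊓ σ a ≤ τ a) ↔ ∀ a, ρ a ≤ α a a ⊓ (σ a ⇨ τ a) :=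
  ⟨fun h a => le_inf (hρ.2 a) (le_himp_iff.2 (h a)),
    fun h a => le_himp_iff.1 ((h a).trans inf_le_right)⟩

end IsStrict

end

/-- The poset of strict relations on (A,α) (ordered pointwise) is a frame:
top is a ↦ α(a,a), bottom is ⊥, meets and arbitrary joins are pointwise,
Heyting implication is (σ ⇒ τ)(a) = α(a,a) ⊓ (σ(a) ⇨ τ(a)); in particular
the infinitary distributive law holds. -/
theorem stmt13 [Order.Frame Ω] (α : A → A → Ω) (hα : IsOSet α) :
    IsStrict α (fun a => α a a) ∧
    (∀ σ, IsStrict α σ → ∀ a, σ a ≤ α a a) ∧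
    IsStrict α (fun _ => (⊥ : Ω)) ∧
    (∀ σ, IsStrict α σ → ∀ a, (⊥ : Ω) ≤ σ a) ∧
    (∀ σ τ, IsStrict α σ → IsStrict α τ → IsStrict α (fun a => σ a ⊓ τ a)) ∧
    (∀ σ τ ρ, IsStrict α σ → IsStrict α τ → IsStrict α ρ →
      ((∀ a, ρ a ≤ σ a ⊓ τ a) ↔ (∀ a, ρ a ≤ σ a) ∧ (∀ a, ρ a ≤ τ a))) ∧
    (∀ S : Set (A → Ω), (∀ σ ∈ S, IsStrict α σ) →
      IsStrict α (fun a => ⨆ σ ∈ S, σ a)) ∧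
    (∀ (S : Set (A → Ω)) (τ : A → Ω), (∀ σ ∈ S, IsStrict α σ) → IsStrict α τ →
      ((∀ σ ∈ S, ∀ a, σ a ≤ τ a) ↔ ∀ a, (⨆ σ ∈ S, σ a) ≤ τ a)) ∧
    (∀ σ τ, IsStrict α σ → IsStrict α τ →
      IsStrict α (fun a => α a a ⊓ (σ a ⇨ τ a))) ∧
    (∀ ρ σ τ, IsStrict α ρ → IsStrict α σ → IsStrict α τ →
      ((∀ a, ρ a ⊓ σ a ≤ τ a) ↔ ∀ a, ρ a ≤ α a a ⊓ (σ a ⇨ τ a))) ∧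
    (∀ (σ : A → Ω) (S : Set (A → Ω)), IsStrict α σ → (∀ τ ∈ S, IsStrict α τ) →
      ∀ a, σ a ⊓ (⨆ τ ∈ S, τ a) = ⨆ τ ∈ S, σ a ⊓ τ a) :=
  ⟨.diag hα, fun _ hσ => hσ.2, .bot, fun _ _ _ => bot_le,
    fun _ _ hσ hτ => hσ.inf hτ,
    fun _ _ _ _ _ _ => by simp only [le_inf_iff, forall_and],
    fun _ hS => .biSup hS,
    fun _ _ _ _ => by simp only [iSup₂_le_iff]; exact ⟨fun h a σ hσ => h σ hσ a, fun h σ hσ a => h a σ hσ⟩,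
    fun _ _ hσ hτ => hσ.himp hα hτ,
    fun _ _ _ hρ _ _ => hρ.inf_le_iff_le_himp,
    fun _ _ _ _ _ => inf_iSup₂_eq _⟩
end

section
/- Define δ(U,V) := (U ⇒ V) ∧ (V ⇒ U) for U,V in a frame Ω. Then (Ω,δ) is an Ω-valued set, and for any Ω-valued set (A,α) the assignments σ ↦ χ_σ with χ_σ(a,U) := α(a,a) ∧ δ(U,σ(a)), and χ ↦ σ_χ with σ_χ(a) := ⋁_{U∈Ω} χ(a,U) ∧ U, give mutually inverse bijections between strict relations on (A,α) and morphisms of Ω-valued sets from (A,α) to (Ω,δ). -/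
variable {Ω A B C : Type*}

/-!
A strict relation `σ` is recovered from `χ_σ` by evaluating at `U = σ a`, where `δ(U, σ a) = ⊤`.
Conversely, for a morphism `χ` into `(Ω, δ)` single-valuedness gives `χ(a,U) ⊓ χ(a,V) ≤ (V ⇨ U)`,
so `χ(a,U) ≤ δ(U, σ_χ a)`: every `U` charged by `χ` at `a` equals `σ_χ a` to that extent, and
extensionality of `χ` in its second argument then shows `χ = χ_{σ_χ}`.
-/

section

variable [Order.Frame Ω]

local notation "δ" => fun U V : Ω => (U ⇨ V) ⊓ (V ⇨ U)

theorem isOSet_himp_inf_himp : IsOSet δ where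
  symm _ _ := inf_comm _ _
  trans U V W := le_inf
    ((inf_le_inf inf_le_left inf_le_left).trans (himp_triangle U V W))
    ((inf_le_inf inf_le_right inf_le_right).trans ((inf_comm _ _).le.trans (himp_triangle W V U)))

theorem iSup_inf_himp_inf_himp_inf (c s : Ω) : ⨆ U, c ⊓ δ U s ⊓ U = c ⊓ s := by
  refine le_antisymm (iSup_le fun U => le_inf (inf_le_left.trans inf_le_left) ?_) ?_
  · exact (inf_le_inf_right U (inf_le_right.trans inf_le_left)).trans himp_inf_le
  · exact le_iSup_of_le s (by simp)

theorem IsOSet.le_diag_s16 {α : A → A → Ω} (hα : IsOSet α) (a a' : A) : α a a' ≤ α a' a' :=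
  (le_inf (hα.symm a a').le le_rfl).trans (hα.trans a' a a')

theorem IsStrict.le_himp_inf_himp {α : A → A → Ω} {σ : A → Ω} (hα : IsOSet α)
    (hσ : IsStrict α σ) (a a' : A) : α a a' ≤ δ (σ a) (σ a') := by
  refine le_inf (le_himp_iff.2 ?_) (le_himp_iff.2 ?_)
  · exact (inf_comm _ _).le.trans (hσ.1 a a')
  · rw [hα.symm a a', inf_comm]
    exact hσ.1 a' a

namespace IsMorphism

variable {α : A → A → Ω} {β : B → B → Ω} {φ : A → B → Ω}

theorem apply_le_left (h : IsMorphism α β φ) (a : A) (b : B) : φ a b ≤ α a a :=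
  (le_iSup (φ a) b).trans (h.total a).ge

theorem apply_le_right (h : IsMorphism α β φ) (a : A) (b : B) : φ a b ≤ β b b := by
  simpa using h.sv a b b

theorem inf_apply_le (h : IsMorphism α β φ) (a a' : A) (b : B) : α a a' ⊓ φ a b ≤ φ a' b :=
  (le_inf le_rfl (inf_le_right.trans (h.apply_le_right a b))).trans (h.ext a a' b b)

theorem apply_inf_le (h : IsMorphism α β φ) (a : A) (b b' : B) : φ a b ⊓ β b b' ≤ φ a b' :=
  (inf_le_inf_right _ (le_inf (h.apply_le_left a b) le_rfl)).trans (h.ext a a b b')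

theorem isStrict_iSup_inf {χ : A → Ω → Ω} {β : Ω → Ω → Ω} (h : IsMorphism α β χ) :
    IsStrict α (fun a => ⨆ U, χ a U ⊓ U) := by
  refine ⟨fun a a' => ?_, fun a => iSup_le fun U => inf_le_left.trans (h.apply_le_left a U)⟩
  rw [iSup_inf_eq]
  refine iSup_mono fun U => ?_
  rw [inf_right_comm, inf_comm (χ a U)]
  exact inf_le_inf_right U (h.inf_apply_le a a' U)

variable {χ : A → Ω → Ω}

theorem apply_le_himp_inf_himp_iSup (h : IsMorphism α δ χ) (a : A) (U : Ω) :
    χ a U ≤ δ U (⨆ V, χ a V ⊓ V) := by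
  refine le_inf (le_himp_iff.2 (le_iSup (fun V => χ a V ⊓ V) U)) (le_himp_iff.2 ?_)
  rw [inf_iSup_eq]
  refine iSup_le fun V => ?_
  calc χ a U ⊓ (χ a V ⊓ V) = χ a U ⊓ χ a V ⊓ V := (inf_assoc _ _ _).symm
    _ ≤ (V ⇨ U) ⊓ V := inf_le_inf_right V ((h.sv a U V).trans inf_le_right)
    _ ≤ U := himp_inf_le

theorem inf_himp_inf_himp_iSup (h : IsMorphism α δ χ) (a : A) (U : Ω) :
    α a a ⊓ δ U (⨆ V, χ a V ⊓ V) = χ a U := by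
  set s := ⨆ V, χ a V ⊓ V
  refine le_antisymm ?_ (le_inf (h.apply_le_left a U) (h.apply_le_himp_inf_himp_iSup a U))
  rw [h.total a, iSup_inf_eq]
  refine iSup_le fun V => ?_
  calc χ a V ⊓ δ U s ≤ χ a V ⊓ (δ V s ⊓ δ s U) :=
        le_inf inf_le_left (le_inf (inf_le_left.trans (h.apply_le_himp_inf_himp_iSup a V))
          (inf_le_right.trans (inf_comm _ _).le))
    _ ≤ χ a V ⊓ δ V U := inf_le_inf_left _ (isOSet_himp_inf_himp.trans V s U)
    _ ≤ χ a U := h.apply_inf_le a V U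

end IsMorphism

theorem IsStrict.isMorphism {α : A → A → Ω} {σ : A → Ω} (hα : IsOSet α) (hσ : IsStrict α σ) :
    IsMorphism α δ (fun a U => α a a ⊓ δ U (σ a)) where
  ext a a' U V := by
    have hδ := (isOSet_himp_inf_himp (Ω := Ω)).trans
    refine le_inf ((inf_le_left.trans inf_le_left).trans (hα.le_diag_s16 a a')) ?_
    calc α a a' ⊓ (α a a ⊓ δ U (σ a)) ⊓ δ U V ≤ δ V U ⊓ δ U (σ a) ⊓ δ (σ a) (σ a') :=
          le_inf (le_inf (inf_le_right.trans (inf_comm _ _).le)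
            (inf_le_left.trans (inf_le_right.trans inf_le_right)))
            ((inf_le_left.trans inf_le_left).trans (hσ.le_himp_inf_himp hα a a'))
      _ ≤ δ V (σ a') := (inf_le_inf_right _ (hδ _ _ _)).trans (hδ _ _ _)
  sv a U V :=
    (inf_le_inf inf_le_right (inf_le_right.trans (inf_comm _ _).le)).trans
      (isOSet_himp_inf_himp.trans U (σ a) V)
  total a :=
    le_antisymm (le_iSup_of_le (σ a) (by simp)) (iSup_le fun _ => inf_le_left)

end

/-- (Ω,δ) with δ(U,V) = (U ⇨ V) ⊓ (V ⇨ U) is an Ω-valued set, and strict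
relations on (A,α) correspond bijectively to morphisms (A,α) → (Ω,δ). -/
theorem stmt16 [Order.Frame Ω] (α : A → A → Ω) (hα : IsOSet α) :
    IsOSet (fun U V : Ω => (U ⇨ V) ⊓ (V ⇨ U)) ∧
    (∀ σ : A → Ω, IsStrict α σ →
      IsMorphism α (fun U V : Ω => (U ⇨ V) ⊓ (V ⇨ U))
        (fun a U => α a a ⊓ ((U ⇨ σ a) ⊓ (σ a ⇨ U)))) ∧
    (∀ χ : A → Ω → Ω, IsMorphism α (fun U V : Ω => (U ⇨ V) ⊓ (V ⇨ U)) χ →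
      IsStrict α (fun a => ⨆ U, χ a U ⊓ U)) ∧
    (∀ σ : A → Ω, IsStrict α σ →
      (fun a => ⨆ U, (α a a ⊓ ((U ⇨ σ a) ⊓ (σ a ⇨ U))) ⊓ U) = σ) ∧
    (∀ χ : A → Ω → Ω, IsMorphism α (fun U V : Ω => (U ⇨ V) ⊓ (V ⇨ U)) χ →
      (fun a U => α a a ⊓ ((U ⇨ ⨆ V, χ a V ⊓ V) ⊓ ((⨆ V, χ a V ⊓ V) ⇨ U))) = χ) := by
  refine ⟨isOSet_himp_inf_himp, fun σ hσ => hσ.isMorphism hα,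
    fun χ hχ => hχ.isStrict_iSup_inf, fun σ hσ => funext fun a => ?_,
    fun χ hχ => funext fun a => funext fun U => hχ.inf_himp_inf_himp_iSup a U⟩
  rw [iSup_inf_himp_inf_himp_inf, inf_eq_right.2 (hσ.2 a)]
end
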